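/- Define Q^u_d(y) = Σ_{k=0}^{d} C(d,k) · ∏_{i=0}^{k-1}(i+1-r)(i+r) · ∏_{i=k+1}^{d}(y+d+r-i)(y+u+r+i). Then for all natural numbers u ≥ 1 and d ≥ 1, one has the dual recurrence (u+d)(y+d+r) · Q^u_d(y) = u(y+r) · Q^{u-1}_d(y+1) + d(y+u+d+r)(y+d-1+2r)(y+d) · Q^u_{d-1}(y), as an identity of polynomials in y and r. -/

import Mathlib

/-!
Writing the factors `y+d+r-i` of `Q` as a rising factorial of `y+r`,
`Q^u_d(y) = Σ_k C(d,k) A_k (y+r)^{(d-k)} ∏_{j=k+1}^{d} (y+u+r+j)` with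
`A_k = ∏_{i<k} (i+1-r)(i+r)`. After multiplying by the prefactors, all three terms of the
recurrence are sums of this shape over `k = 0..d`, and the `k`-th summand of the difference of
the two sides is `T_{k+1} - T_k` with `T_k = -k C(d,k) A_k (y+r)^{(d-k)} ∏_{j=k}^{d} (y+u+r+j)`,
so the sum telescopes to `T_{d+1} - T_0 = 0`.
-/
open Finset

/-- The two-variable polynomial ring `ℚ[y, r]`: variable `0` is `y` and variable `1` is `r`. -/
noncomputable abbrev R2 : Type := MvPolynomial (Fin 2) ℚ

noncomputable def r : R2 := MvPolynomial.X 1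

/-- `Q u d y = Σ_{k=0}^{d} C(d,k) ∏_{i=0}^{k-1}(i+1-r)(i+r) ∏_{i=k+1}^{d}(y+d+r-i)(y+u+r+i)`,
as a function of the element `y` (so that substitutions like `y ↦ y+1` are meaningful). -/
noncomputable def Q (u d : ℕ) (y : R2) : R2 :=
  ∑ k ∈ Finset.range (d + 1),
    (d.choose k : R2) * (∏ i ∈ Finset.range k, (((i : R2) + 1 - r) * ((i : R2) + r))) *
      ∏ i ∈ Finset.Icc (k + 1) d,
        ((y + (d : R2) + r - (i : R2)) * (y + (u : R2) + r + (i : R2)))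

/-- `φ d y = ∏_{i=1}^{d} (y+i)(y+i-1+2r)`. -/
noncomputable def phi (d : ℕ) (y : R2) : R2 :=
  ∏ i ∈ Finset.Icc 1 d, ((y + (i : R2)) * (y + (i : R2) - 1 + 2 * r))

section Pochhammer

variable {S : Type*} [CommSemiring S]

theorem ascPochhammer_eval_eq_prod_range (x : S) (m : ℕ) :
    (ascPochhammer S m).eval x = ∏ j ∈ range m, (x + j) := by
  induction m with
  | zero => simp
  | succ m ih => rw [ascPochhammer_succ_eval, ih, prod_range_succ]

theorem mul_ascPochhammer_eval_add_one (x : S) (m : ℕ) :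
    x * (ascPochhammer S m).eval (x + 1) = (ascPochhammer S m).eval x * (x + m) := by
  rw [← ascPochhammer_succ_eval, ascPochhammer_succ_left, Polynomial.eval_mul,
    Polynomial.eval_comp]
  simp

end Pochhammer

theorem prod_Icc_add_sub_eq_ascPochhammer_eval {S : Type*} [CommRing S] (x : S) {k d : ℕ}
    (hk : k ≤ d) : ∏ i ∈ Icc (k + 1) d, (x + d - i) = (ascPochhammer S (d - k)).eval x := by
  rw [ascPochhammer_eval_eq_prod_range, ← Ico_add_one_right_eq_Icc, prod_Ico_eq_prod_range,
    ← prod_range_reflect, show d + 1 - (k + 1) = d - k by omega]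
  refine prod_congr rfl fun j hj => ?_
  have hj : j < d - k := mem_range.mp hj
  rw [show k + 1 + (d - k - 1 - j) = d - j by omega, Nat.cast_sub (by omega)]
  ring

noncomputable def coeffProd (k : ℕ) : R2 :=
  ∏ i ∈ range k, (((i : R2) + 1 - r) * ((i : R2) + r))

noncomputable def tailProd (u d l : ℕ) (y : R2) : R2 :=
  ∏ j ∈ Icc l d, (y + u + r + j)

noncomputable def qTerm (u d : ℕ) (y : R2) (k : ℕ) : R2 :=
  d.choose k * coeffProd k * (ascPochhammer R2 (d - k)).eval (y + r) * tailProd u d (k + 1) y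

theorem Q_eq_sum_qTerm (u d : ℕ) (y : R2) : Q u d y = ∑ k ∈ range (d + 1), qTerm u d y k := by
  refine sum_congr rfl fun k hk => ?_
  have hk : k ≤ d := Nat.lt_succ_iff.mp (mem_range.mp hk)
  rw [qTerm, ← prod_Icc_add_sub_eq_ascPochhammer_eval _ hk, tailProd,
    mul_assoc _ (∏ i ∈ Icc (k + 1) d, _), ← prod_mul_distrib, coeffProd]
  congr 1
  exact prod_congr rfl fun i _ => by ring

theorem mul_Q_add_one (v d : ℕ) (y : R2) :
    (y + r) * Q v d (y + 1) =
      ∑ k ∈ range (d + 1), qTerm (v + 1) d y k * (y + r + (d - k : ℕ)) := by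
  rw [Q_eq_sum_qTerm, mul_sum]
  refine sum_congr rfl fun k _ => ?_
  have hshift := mul_ascPochhammer_eval_add_one (y + r) (d - k)
  have htail : tailProd v d (k + 1) (y + 1) = tailProd (v + 1) d (k + 1) y :=
    prod_congr rfl fun j _ => by push_cast; ring
  rw [qTerm, qTerm, ← htail, show y + 1 + r = y + r + 1 by ring]
  linear_combination (d.choose k * coeffProd k * tailProd v d (k + 1) (y + 1) : R2) * hshift

theorem tailProd_eq_mul (u d k : ℕ) (y : R2) (hk : k ≤ d) :
    tailProd u d k y = (y + u + r + k) * tailProd u d (k + 1) y := by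
  rw [tailProd, tailProd, Icc_add_one_left_eq_Ioc, ← mul_prod_Ioc_eq_prod_Icc hk]

theorem mul_Q_eq_sum (u n : ℕ) (y : R2) :
    (y + u + (n + 1 : ℕ) + r) * Q u n y =
      ∑ k ∈ range (n + 2),
        n.choose k * coeffProd k * (ascPochhammer R2 (n - k)).eval (y + r) *
          tailProd u (n + 1) (k + 1) y := by
  rw [Q_eq_sum_qTerm, mul_sum, sum_range_succ _ (n + 1), Nat.choose_succ_self, Nat.cast_zero,
    zero_mul, zero_mul, zero_mul, add_zero]
  refine sum_congr rfl fun k hk => ?_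
  have hk : k ≤ n := Nat.lt_succ_iff.mp (mem_range.mp hk)
  rw [qTerm, tailProd, tailProd, prod_Icc_succ_top (by omega)]
  push_cast
  ring

noncomputable def telescoper (u d : ℕ) (y : R2) (k : ℕ) : R2 :=
  -(k * d.choose k * coeffProd k * (ascPochhammer R2 (d - k)).eval (y + r) * tailProd u d k y)

theorem coeffProd_succ (k : ℕ) : coeffProd (k + 1) = coeffProd k * ((k + 1 - r) * (k + r)) :=
  prod_range_succ _ k

theorem qTerm_defect_eq_telescoper_sub (u n k : ℕ) (y : R2) (hk : k ≤ n + 1) :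
    ((u : R2) + (n + 1 : ℕ)) * (y + (n + 1 : ℕ) + r) * qTerm u (n + 1) y k
        - u * (qTerm u (n + 1) y k * (y + r + (n + 1 - k : ℕ)))
        - (n + 1 : ℕ) * (y + (n + 1 : ℕ) - 1 + 2 * r) * (y + (n + 1 : ℕ)) *
            (n.choose k * coeffProd k * (ascPochhammer R2 (n - k)).eval (y + r) *
              tailProd u (n + 1) (k + 1) y) =
      telescoper u (n + 1) y (k + 1) - telescoper u (n + 1) y k := by
  rcases hk.lt_or_eq with hk | rfl
  · obtain ⟨m, rfl⟩ := Nat.exists_eq_add_of_le (Nat.lt_succ_iff.mp hk)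
    have h1 : ((k + 1) * (k + m + 1).choose (k + 1) : R2) = (m + 1) * (k + m + 1).choose k := by
      have := Nat.choose_succ_right_eq (k + m + 1) k
      rw [show k + m + 1 - k = m + 1 by omega] at this
      exact_mod_cast (mul_comm _ _).trans (this.trans (mul_comm _ _))
    have h2 : ((k + m + 1) * (k + m).choose k : R2) = (m + 1) * (k + m + 1).choose k := by
      have := Nat.choose_mul_succ_eq (k + m) k
      rw [show k + m + 1 - k = m + 1 by omega] at this
      exact_mod_cast (mul_comm _ _).trans (this.trans (mul_comm _ _))
    rw [qTerm, telescoper, telescoper, tailProd_eq_mul u _ k y (by omega),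
      show k + m + 1 - k = m + 1 by omega, show k + m + 1 - (k + 1) = m by omega,
      show k + m - k = m by omega, ascPochhammer_succ_eval, coeffProd_succ]
    push_cast
    linear_combination (coeffProd k * ((k + 1 - r) * (k + r)) *
        (ascPochhammer R2 m).eval (y + r) * tailProd u (k + m + 1) (k + 1) y) * h1 -
      ((y + (k + m + 1) - 1 + 2 * r) * (y + (k + m + 1)) * coeffProd k *
        (ascPochhammer R2 m).eval (y + r) * tailProd u (k + m + 1) (k + 1) y) * h2
  · simp only [qTerm, telescoper, tailProd, Nat.choose_self, Nat.choose_succ_self, tsub_self,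
      Nat.sub_eq_zero_of_le (Nat.le_succ _), ascPochhammer_zero, Polynomial.eval_one,
      Icc_eq_empty_of_lt (Nat.lt_succ_self _), prod_empty, Icc_self, prod_singleton, Nat.cast_zero]
    ring

theorem Q_dual_recurrence (v n : ℕ) (y : R2) :
    (((v + 1 : ℕ) : R2) + (n + 1 : ℕ)) * (y + (n + 1 : ℕ) + r) * Q (v + 1) (n + 1) y =
      ((v + 1 : ℕ) : R2) * (y + r) * Q v (n + 1) (y + 1) +
        ((n + 1 : ℕ) : R2) * (y + ((v + 1 : ℕ) : R2) + (n + 1 : ℕ) + r) *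
          (y + (n + 1 : ℕ) - 1 + 2 * r) * (y + (n + 1 : ℕ)) * Q (v + 1) n y := by
  set u := v + 1
  rw [Q_eq_sum_qTerm, mul_assoc (u : R2), mul_Q_add_one,
    show ((n + 1 : ℕ) : R2) * (y + u + (n + 1 : ℕ) + r) * (y + (n + 1 : ℕ) - 1 + 2 * r) *
        (y + (n + 1 : ℕ)) * Q u n y = (n + 1 : ℕ) * (y + (n + 1 : ℕ) - 1 + 2 * r) *
        (y + (n + 1 : ℕ)) * ((y + u + (n + 1 : ℕ) + r) * Q u n y) by ring,
    mul_Q_eq_sum, mul_sum, mul_sum, mul_sum, ← sub_eq_zero, ← sub_sub, ← sum_sub_distrib,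
    ← sum_sub_distrib, sum_congr rfl fun k hk => qTerm_defect_eq_telescoper_sub u n k y
      (Nat.lt_succ_iff.mp (mem_range.mp hk)), sum_range_sub]
  simp [telescoper]

theorem stmt7 (u d : ℕ) (hu : 1 ≤ u) (hd : 1 ≤ d) :
    ((u : R2) + (d : R2)) * (MvPolynomial.X 0 + (d : R2) + r) * Q u d (MvPolynomial.X 0) =
      (u : R2) * (MvPolynomial.X 0 + r) * Q (u - 1) d (MvPolynomial.X 0 + 1) +
        (d : R2) * (MvPolynomial.X 0 + (u : R2) + (d : R2) + r) *
          (MvPolynomial.X 0 + (d : R2) - 1 + 2 * r) * (MvPolynomial.X 0 + (d : R2)) *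
            Q u (d - 1) (MvPolynomial.X 0) := by
  obtain ⟨v, rfl⟩ := Nat.exists_eq_add_of_le' hu
  obtain ⟨n, rfl⟩ := Nat.exists_eq_add_of_le' hd
  exact Q_dual_recurrence v n _
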